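/- arXiv:2106.07250 — 7 statements merged into one kernel-verified Lean document; each statement's English description precedes it below -/
import Mathlib

section
/- Let X and Y be finite nonempty types, let p : X × Y → ℝ be strictly positive with Σ_{x,y} p(x,y) = 1, and write p(x) = Σ_y p(x,y) and p(y|x) = p(x,y)/p(x). Let p_n : X × Y → ℝ be strictly positive (a noise conditional distribution), let ν > 0, and let G : X × Y → ℝ be strictly positive. Then Σ_{x,y} p(x)·[ p(y|x)·log(1+G(x,y)) + ν·p_n(x,y)·log(1 + 1/G(x,y)) ] = Σ_{x,y} p(x,y)·[ −Ψ_NS(G(x,y)) + Ψ_NS′(G(x,y))·G(x,y) − Ψ_NS′(G(x,y))·(ν·p_n(x,y)/p(y|x)) ]. (Proposition 1: the expected negative-sampling loss equals the Bregman functional B̃_{Ψ_NS} between f(x,y) = ν·p_n(x,y)/p(y|x) and G.) -/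
open Finset

/-- The negative-sampling potential `Ψ_NS(z) = z·log z − (1+z)·log(1+z)`. -/
noncomputable def PsiNS (z : ℝ) : ℝ := z * Real.log z - (1 + z) * Real.log (1 + z)

/-- Its derivative `Ψ_NS′(z) = log z − log(1+z)`. -/
noncomputable def PsiNS' (z : ℝ) : ℝ := Real.log z - Real.log (1 + z)

/-- Proposition 1: the expected negative-sampling loss equals the Bregman
functional `B̃_{Ψ_NS}` between `f(x,y) = ν·p_n(x,y)/p(y|x)` and `G`. -/
theorem stmt_1 {X Y : Type*} [Fintype X] [Fintype Y] [Nonempty X] [Nonempty Y]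
    (p pn G : X × Y → ℝ) (ν : ℝ)
    (hp : ∀ z, 0 < p z) (hpsum : ∑ z : X × Y, p z = 1)
    (hpn : ∀ z, 0 < pn z) (hν : 0 < ν) (hG : ∀ z, 0 < G z) :
    ∑ x : X, ∑ y : Y,
        (∑ y' : Y, p (x, y')) *
          ((p (x, y) / ∑ y' : Y, p (x, y')) * Real.log (1 + G (x, y))
            + ν * pn (x, y) * Real.log (1 + 1 / G (x, y)))
      = ∑ x : X, ∑ y : Y,
          p (x, y) *
            (-(PsiNS (G (x, y))) + PsiNS' (G (x, y)) * G (x, y)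
              - PsiNS' (G (x, y)) * (ν * pn (x, y) / (p (x, y) / ∑ y' : Y, p (x, y')))) := by
  refine Finset.sum_congr rfl fun x _ => Finset.sum_congr rfl fun y _ => ?_
  have hpx : 0 < ∑ y' : Y, p (x, y') :=
    Finset.sum_pos (fun y' _ => hp (x, y')) Finset.univ_nonempty
  set S := ∑ y' : Y, p (x, y') with hS
  have hG0 := hG (x, y)
  have hG1 : (0:ℝ) < 1 + G (x, y) := by linarith
  have hlog : Real.log (1 + 1 / G (x, y)) = Real.log (1 + G (x, y)) - Real.log (G (x, y)) := by
    rw [show 1 + 1 / G (x, y) = (1 + G (x, y)) / G (x, y) by field_simp; ring,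
      Real.log_div (by positivity) hG0.ne']
  rw [hlog]
  unfold PsiNS PsiNS'
  have hp0 := (hp (x, y)).ne'
  field_simp
  ring
end

section
/- Let a > 0 and b > 0, and define h : (0,∞) → ℝ by h(t) = a·log(1+t) + b·log(1 + 1/t). Then h attains a strict global minimum at t = b/a; that is, for every t > 0 with t ≠ b/a, h(t) > h(b/a). -/
private lemma h_eq (a b t : ℝ) (ht : 0 < t) :
    a * Real.log (1 + t) + b * Real.log (1 + 1 / t)
      = (a + b) * Real.log (1 + t) - b * Real.log t := by
  have h1 : (1 : ℝ) + 1 / t = (1 + t) / t := by field_simp; ring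
  rw [h1, Real.log_div (by positivity) (ne_of_gt ht)]
  ring

private lemma h_deriv (a b t : ℝ) (ht : 0 < t) :
    HasDerivAt (fun t => (a + b) * Real.log (1 + t) - b * Real.log t)
      ((a + b) / (1 + t) - b / t) t := by
  have h1 : HasDerivAt (fun t : ℝ => Real.log (1 + t)) (1 / (1 + t)) t := by
    have := ((hasDerivAt_id t).const_add 1).log (by positivity)
    simpa using this
  have h2 : HasDerivAt Real.log (1 / t) t := by
    simpa [one_div] using Real.hasDerivAt_log (ne_of_gt ht)
  have := (h1.const_mul (a + b)).sub (h2.const_mul b)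
  exact this.congr_deriv (by ring)

private lemma h_cont (a b : ℝ) (s : Set ℝ) (hs : ∀ t ∈ s, 0 < t) :
    ContinuousOn (fun t => (a + b) * Real.log (1 + t) - b * Real.log t) s :=
  fun t ht => ((h_deriv a b t (hs t ht)).continuousAt).continuousWithinAt

/-- The per-instance negative-sampling loss `h(t) = a·log(1+t) + b·log(1+1/t)`
attains a strict global minimum on `(0,∞)` at `t = b/a`. -/
theorem stmt_2 (a b : ℝ) (ha : 0 < a) (hb : 0 < b) :
    ∀ t : ℝ, 0 < t → t ≠ b / a →
      a * Real.log (1 + t) + b * Real.log (1 + 1 / t)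
        > a * Real.log (1 + b / a) + b * Real.log (1 + 1 / (b / a)) := by
  intro t ht hne
  set t0 := b / a with ht0def
  have ht0 : 0 < t0 := div_pos hb ha
  set h : ℝ → ℝ := fun t => (a + b) * Real.log (1 + t) - b * Real.log t with hh
  rw [h_eq a b t ht, h_eq a b t0 ht0]
  show h t0 < h t
  rcases lt_or_gt_of_ne hne with hlt | hgt
  · -- t < t0 : h strictly antitone on Ioc 0 t0
    have hanti : StrictAntiOn h (Set.Ioc 0 t0) := by
      apply strictAntiOn_of_deriv_neg (convex_Ioc 0 t0)
        (h_cont a b _ (fun x hx => hx.1))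
      intro x hx
      rw [interior_Ioc] at hx
      rw [(h_deriv a b x hx.1).deriv]
      have hx1 : (0:ℝ) < 1 + x := by linarith [hx.1]
      rw [sub_neg, div_lt_div_iff₀ hx1 hx.1]
      have : a * x < b := by
        have := hx.2
        rw [ht0def, lt_div_iff₀ ha] at this
        nlinarith
      nlinarith
    exact hanti (Set.mem_Ioc.2 ⟨ht, le_of_lt hlt⟩) (Set.mem_Ioc.2 ⟨ht0, le_refl _⟩) hlt
  · -- t0 < t : h strictly monotone on Ici t0
    have hmono : StrictMonoOn h (Set.Ici t0) := by
      apply strictMonoOn_of_deriv_pos (convex_Ici t0)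
        (h_cont a b _ (fun x hx => lt_of_lt_of_le ht0 hx))
      intro x hx
      rw [interior_Ici] at hx
      have hxp : 0 < x := lt_trans ht0 hx
      rw [(h_deriv a b x hxp).deriv]
      have hx1 : (0:ℝ) < 1 + x := by linarith
      rw [sub_pos, div_lt_div_iff₀ hxp hx1]
      have : b < a * x := by
        have := Set.mem_Ioi.mp hx
        rw [ht0def, div_lt_iff₀ ha] at this
        nlinarith
      nlinarith
    exact hmono (Set.mem_Ici.2 (le_refl _)) (Set.mem_Ici.2 (le_of_lt hgt)) hgt
end

section
/- Let X and Y be finite nonempty types, let p : X × Y → ℝ be strictly positive with Σ_{x,y} p(x,y) = 1, write p(x) = Σ_y p(x,y) and p(y|x) = p(x,y)/p(x), let p_n : X × Y → ℝ be strictly positive, and let ν > 0. Define the expected NS loss L(G) = Σ_{x,y} p(x)·[ p(y|x)·log(1+G(x,y)) + ν·p_n(x,y)·log(1+1/G(x,y)) ] over strictly positive functions G : X × Y → ℝ. Then G*(x,y) = ν·p_n(x,y)/p(y|x) is the unique global minimizer of L: for every strictly positive G with G ≠ G*, L(G) > L(G*). (Proposition 2: when the NS loss is minimized, G(y|x;θ)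 = ν·p_n(y|x)/p_d(y|x).) -/
open Finset

lemma key_lt (a b g gs : ℝ) (ha : 0 < a) (hb : 0 < b) (hg : 0 < g)
    (hgs : gs = b / a) (hne : g ≠ gs) :
    a * Real.log (1 + gs) + b * Real.log (1 + 1/gs)
      < a * Real.log (1 + g) + b * Real.log (1 + 1/g) := by
  have hgs0 : 0 < gs := by rw [hgs]; positivity
  have h1g : (0:ℝ) < 1 + g := by linarith
  have h1gs : (0:ℝ) < 1 + gs := by linarith
  have h1 : Real.log (1 + gs) - Real.log (1 + g) < (1 + gs) / (1 + g) - 1 := by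
    rw [← Real.log_div (by positivity) (by positivity)]
    apply Real.log_lt_sub_one_of_pos (by positivity)
    intro h
    apply hne
    field_simp at h
    linarith
  have h2 : Real.log (1 + 1/gs) - Real.log (1 + 1/g)
      ≤ (1 + 1/gs) / (1 + 1/g) - 1 := by
    rw [← Real.log_div (by positivity) (by positivity)]
    exact Real.log_le_sub_one_of_pos (by positivity)
  have h1' := mul_lt_mul_of_pos_left h1 ha
  have h2' := mul_le_mul_of_nonneg_left h2 hb.le
  have heq : a * ((1 + gs) / (1 + g) - 1) + b * ((1 + 1/gs) / (1 + 1/g) - 1) = 0 := by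
    have hb' : b = a * gs := by rw [hgs]; field_simp
    rw [hb']
    field_simp
    ring
  linarith

lemma key_le (a b g gs : ℝ) (ha : 0 < a) (hb : 0 < b) (hg : 0 < g)
    (hgs : gs = b / a) :
    a * Real.log (1 + gs) + b * Real.log (1 + 1/gs)
      ≤ a * Real.log (1 + g) + b * Real.log (1 + 1/g) := by
  by_cases h : g = gs
  · rw [h]
  · exact (key_lt a b g gs ha hb hg hgs h).le

/-- Proposition 2: `G*(x,y) = ν·p_n(x,y)/p(y|x)` is the unique global minimizer
of the expected negative-sampling loss over strictly positive `G`. -/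
theorem stmt_3 {X Y : Type*} [Fintype X] [Fintype Y] [Nonempty X] [Nonempty Y]
    (p pn : X × Y → ℝ) (ν : ℝ)
    (hp : ∀ z, 0 < p z) (hpsum : ∑ z : X × Y, p z = 1)
    (hpn : ∀ z, 0 < pn z) (hν : 0 < ν)
    (L : (X × Y → ℝ) → ℝ)
    (hL : ∀ G : X × Y → ℝ,
      L G = ∑ x : X, ∑ y : Y,
        (∑ y' : Y, p (x, y')) *
          ((p (x, y) / ∑ y' : Y, p (x, y')) * Real.log (1 + G (x, y))
            + ν * pn (x, y) * Real.log (1 + 1 / G (x, y))))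
    (Gstar : X × Y → ℝ)
    (hGstar : ∀ z : X × Y, Gstar z = ν * pn z / (p z / ∑ y' : Y, p (z.1, y'))) :
    ∀ G : X × Y → ℝ, (∀ z, 0 < G z) → G ≠ Gstar → L G > L Gstar := by
  intro G hG hne
  have hS : ∀ x : X, 0 < ∑ y' : Y, p (x, y') := fun x =>
    Finset.sum_pos (fun y _ => hp _) Finset.univ_nonempty
  have conv : ∀ H : X × Y → ℝ,
      (∑ x : X, ∑ y : Y,
        (∑ y' : Y, p (x, y')) *
          ((p (x, y) / ∑ y' : Y, p (x, y')) * Real.log (1 + H (x, y))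
            + ν * pn (x, y) * Real.log (1 + 1 / H (x, y))))
      = ∑ z : X × Y, (∑ y' : Y, p (z.1, y')) *
          ((p z / ∑ y' : Y, p (z.1, y')) * Real.log (1 + H z)
            + ν * pn z * Real.log (1 + 1 / H z)) := fun H =>
    (Fintype.sum_prod_type (fun z : X × Y => (∑ y' : Y, p (z.1, y')) *
      ((p z / ∑ y' : Y, p (z.1, y')) * Real.log (1 + H z)
        + ν * pn z * Real.log (1 + 1 / H z)))).symm
  rw [hL G, hL Gstar, conv G, conv Gstar]
  obtain ⟨z₀, hz₀⟩ := Function.ne_iff.mp hne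
  apply Finset.sum_lt_sum
  · intro z _
    have hSz := hS z.1
    apply mul_le_mul_of_nonneg_left _ hSz.le
    refine key_le _ _ _ _ (div_pos (hp z) hSz) (mul_pos hν (hpn z)) (hG _) ?_
    rw [hGstar ⟨z.1, z.2⟩]
  · refine ⟨z₀, Finset.mem_univ _, ?_⟩
    have hSz := hS z₀.1
    apply mul_lt_mul_of_pos_left _ hSz
    refine key_lt _ _ _ _ (div_pos (hp z₀) hSz) (mul_pos hν (hpn z₀)) (hG _) ?_ hz₀
    rw [hGstar ⟨z₀.1, z₀.2⟩]
end

section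
/- Let Y be a finite nonempty type, let p_d : Y → ℝ and p_n : Y → ℝ be strictly positive, let ν > 0, and let f : Y → ℝ satisfy exp(f(y)) = p_d(y)/(ν·p_n(y)) for all y. Then for every y, the softmax probability exp(f(y)) / Σ_{y′} exp(f(y′)) equals p_d(y) / ( p_n(y) · Σ_{y′} p_d(y′)/p_n(y′) ). (Proposition 3: the objective distribution of the softmax model probability p_θ(y|x) at the optimum of the NS loss.) -/
open Finset

/-- Proposition 3: at the optimum of the NS loss, where
`exp(f(y)) = p_d(y)/(ν·p_n(y))`, the softmax probability equals the objective
distribution `p_d(y) / ( p_n(y) · Σ_{y′} p_d(y′)/p_n(y′) )`. -/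
theorem stmt_4 {Y : Type*} [Fintype Y] [Nonempty Y]
    (pd pn : Y → ℝ) (ν : ℝ) (f : Y → ℝ)
    (hpd : ∀ y, 0 < pd y) (hpn : ∀ y, 0 < pn y) (hν : 0 < ν)
    (hf : ∀ y, Real.exp (f y) = pd y / (ν * pn y)) :
    ∀ y : Y, Real.exp (f y) / (∑ y' : Y, Real.exp (f y'))
      = pd y / (pn y * ∑ y' : Y, pd y' / pn y') := by
  intro y
  have hS : 0 < ∑ y' : Y, pd y' / pn y' :=
    Finset.sum_pos (fun i _ => div_pos (hpd i) (hpn i)) Finset.univ_nonempty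
  have hsum : (∑ y' : Y, Real.exp (f y')) = (∑ y' : Y, pd y' / pn y') / ν := by
    rw [Finset.sum_div]
    refine Finset.sum_congr rfl fun i _ => ?_
    rw [hf i]
    field_simp
  rw [hf y, hsum]
  rw [div_div_div_eq]
  rw [div_eq_div_iff (by exact (mul_pos (mul_pos hν (hpn y)) hS).ne') (by exact (mul_pos (hpn y) hS).ne')]
  ring
end

section
/- Let Y be a finite nonempty type with cardinality |Y|, let p : Y → ℝ be nonnegative with Σ_y p(y) = 1, let λ ∈ [0,1], and define the label-smoothed target q(y) = (1−λ)·p(y) + λ/|Y|. Let g : Y → ℝ be strictly positive with Σ_y g(y) = 1. Then q is nonnegative with Σ_y q(y) = 1, and for Ψ(v) = Σ_y v(y)·log v(y), the Bregman functional satisfies B̃_Ψ(q, g) = −(1−λ)·Σ_y p(y)·log g(y) − (λ/|Y|)·Σ_y log g(y). (Eq. (18): the cross entropy whose objective distribution matches SANS is the label-smoothed softmax cross-entropy loss.) -/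
open Finset

/-- Eq. (18): the label-smoothed target `q = (1−λ)·p + λ·u{1,|Y|}` is a
probability distribution, and the Bregman functional with negative-entropy
potential between `q` and a prediction `g` is the label-smoothed softmax
cross-entropy loss. -/
theorem stmt_9 {Y : Type*} [Fintype Y] [Nonempty Y]
    (p : Y → ℝ) (lam : ℝ) (g : Y → ℝ)
    (hp : ∀ y, 0 ≤ p y) (hpsum : ∑ y : Y, p y = 1)
    (hlam : lam ∈ Set.Icc (0 : ℝ) 1)
    (hg : ∀ y, 0 < g y) (hgsum : ∑ y : Y, g y = 1)
    (q : Y → ℝ) (hq : ∀ y, q y = (1 - lam) * p y + lam / (Fintype.card Y : ℝ)) :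
    (∀ y, 0 ≤ q y) ∧ (∑ y : Y, q y = 1) ∧
      (-(∑ y : Y, g y * Real.log (g y))
          + (∑ y : Y, (Real.log (g y) + 1) * g y)
          - (∑ y : Y, (Real.log (g y) + 1) * q y)
        = -(1 - lam) * ∑ y : Y, p y * Real.log (g y)
            - (lam / (Fintype.card Y : ℝ)) * ∑ y : Y, Real.log (g y)) := by
  have hcard : (0 : ℝ) < (Fintype.card Y : ℝ) := by
    exact_mod_cast Fintype.card_pos
  obtain ⟨hl0, hl1⟩ := hlam
  refine ⟨fun y => ?_, ?_, ?_⟩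
  · rw [hq]
    have h1 := hp y
    have h2 : 0 ≤ 1 - lam := by linarith
    have : 0 ≤ lam / (Fintype.card Y : ℝ) := div_nonneg hl0 hcard.le
    nlinarith
  · simp only [hq, sum_add_distrib, ← mul_sum, hpsum, sum_const, card_univ, nsmul_eq_mul]
    field_simp
    ring
  · have h1 : ∑ y : Y, (Real.log (g y) + 1) * g y
        = (∑ y : Y, g y * Real.log (g y)) + 1 := by
      simp only [add_mul, one_mul]
      rw [Finset.sum_add_distrib, hgsum]
      congr 1
      exact Finset.sum_congr rfl fun y _ => mul_comm _ _
    have h2 : ∑ y : Y, (Real.log (g y) + 1) * q y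
        = (1 - lam) * (∑ y : Y, p y * Real.log (g y))
          + (lam / (Fintype.card Y : ℝ)) * (∑ y : Y, Real.log (g y)) + 1 := by
      have hqsum : ∑ y : Y, q y = 1 := by
        simp only [hq, sum_add_distrib, ← mul_sum, hpsum, sum_const, card_univ, nsmul_eq_mul]
        field_simp
        ring
      calc ∑ y : Y, (Real.log (g y) + 1) * q y
          = (∑ y : Y, Real.log (g y) * q y) + ∑ y : Y, q y := by
            rw [← Finset.sum_add_distrib]; congr 1; ext y; ring
        _ = (1 - lam) * (∑ y : Y, p y * Real.log (g y))
            + (lam / (Fintype.card Y : ℝ)) * (∑ y : Y, Real.log (g y)) + 1 := by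
            rw [hqsum]
            congr 1
            simp only [hq, mul_sum]
            rw [← Finset.sum_add_distrib]
            congr 1; ext y; ring
    rw [h1, h2]; ring
end

section
/- Let Y be a finite nonempty type, let p : Y → ℝ be strictly positive with Σ_y p(y) = 1, and let p_n : Y → ℝ be strictly positive. Define T(y) = p_n(y) · Σ_{y′} p(y′)/p_n(y′) and q(y) = p(y)/T(y). Then q is strictly positive with Σ_y q(y) = 1, and for every strictly positive g : Y → ℝ with Σ_y g(y) = 1 and Ψ(v) = Σ_y v(y)·log v(y), the Bregman functional satisfies B̃_Ψ(q, g) = −Σ_y T(y)^{-1}·p(y)·log g(y). (Eq. (16): the cross entropy corresponding to NS with frequency-based noise is a backward-corrected cross-entropy loss with weights T^{-1}.) -/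
open Finset

/-- Eq. (16): the objective distribution `q(y) = p(y)/T(y)` of NS with
frequency-based noise is a probability distribution, and the corresponding
Bregman functional with negative-entropy potential is the backward-corrected
cross-entropy loss with weights `T⁻¹`. -/
theorem stmt_10 {Y : Type*} [Fintype Y] [Nonempty Y]
    (p pn : Y → ℝ)
    (hp : ∀ y, 0 < p y) (hpsum : ∑ y : Y, p y = 1)
    (hpn : ∀ y, 0 < pn y)
    (T q : Y → ℝ)
    (hT : ∀ y, T y = pn y * ∑ y' : Y, p y' / pn y')
    (hq : ∀ y, q y = p y / T y) :
    (∀ y, 0 < q y) ∧ (∑ y : Y, q y = 1) ∧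
      ∀ g : Y → ℝ, (∀ y, 0 < g y) → (∑ y : Y, g y = 1) →
        (-(∑ y : Y, g y * Real.log (g y))
            + (∑ y : Y, (Real.log (g y) + 1) * g y)
            - (∑ y : Y, (Real.log (g y) + 1) * q y)
          = -∑ y : Y, (T y)⁻¹ * p y * Real.log (g y)) := by
  have hS : 0 < ∑ y' : Y, p y' / pn y' := by
    apply Finset.sum_pos (fun y _ => div_pos (hp y) (hpn y)) Finset.univ_nonempty
  have hTpos : ∀ y, 0 < T y := fun y => by rw [hT y]; exact mul_pos (hpn y) hS
  have hqpos : ∀ y, 0 < q y := fun y => by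
    rw [hq y]; exact div_pos (hp y) (hTpos y)
  have hqsum : ∑ y : Y, q y = 1 := by
    have : ∀ y : Y, q y = (p y / pn y) * (∑ y' : Y, p y' / pn y')⁻¹ := by
      intro y
      rw [hq y, hT y]
      field_simp
    rw [Finset.sum_congr rfl (fun y _ => this y), ← Finset.sum_mul]
    exact mul_inv_cancel₀ hS.ne'
  refine ⟨hqpos, hqsum, fun g hg hgsum => ?_⟩
  have key : ∀ y, (T y)⁻¹ * p y = q y := fun y => by
    rw [hq y, div_eq_inv_mul]
  have e1 : ∑ y : Y, (Real.log (g y) + 1) * g y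
      = (∑ y : Y, g y * Real.log (g y)) + 1 := by
    have h : ∀ y : Y, (Real.log (g y) + 1) * g y = g y * Real.log (g y) + g y :=
      fun y => by ring
    rw [Finset.sum_congr rfl (fun y _ => h y), Finset.sum_add_distrib, hgsum]
  have e2 : ∑ y : Y, (Real.log (g y) + 1) * q y
      = (∑ y : Y, q y * Real.log (g y)) + 1 := by
    have h : ∀ y : Y, (Real.log (g y) + 1) * q y = q y * Real.log (g y) + q y :=
      fun y => by ring
    rw [Finset.sum_congr rfl (fun y _ => h y), Finset.sum_add_distrib, hqsum]
  have e3 : ∑ y : Y, (T y)⁻¹ * p y * Real.log (g y)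
      = ∑ y : Y, q y * Real.log (g y) :=
    Finset.sum_congr rfl fun y _ => by rw [key y]
  rw [e1, e2, e3]; ring
end

section
/- Let Y be a finite type with at least two elements, let p_d : Y → ℝ be strictly positive with Σ_y p_d(y) = 1, and fix y₀ ∈ Y. Let p_n, p_n′ : Y → ℝ be strictly positive noise distributions that agree on Y \ {y₀} and satisfy p_n(y₀) < p_n′(y₀). Then the objective-distribution probability at y₀ strictly decreases: p_d(y₀) / ( p_n(y₀) · Σ_y p_d(y)/p_n(y) ) > p_d(y₀) / ( p_n′(y₀) · Σ_y p_d(y)/p_n′(y) ). (Section 3.1.2: under frequency-based noise, the optimal model probability of a label decreases as the noise probability of that label increases, i.e., frequency-based noise has a smoothing effect on the objective distribution.) -/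
open Finset

/-- Section 3.1.2: under frequency-based noise, increasing the noise
probability of a single label strictly decreases the objective-distribution
probability of that label (smoothing effect). -/
theorem stmt_15 {Y : Type*} [Fintype Y] (hcard : 1 < Fintype.card Y)
    (pd pn pn' : Y → ℝ) (y₀ : Y)
    (hpd : ∀ y, 0 < pd y) (hsum : ∑ y : Y, pd y = 1)
    (hpn : ∀ y, 0 < pn y) (hpn' : ∀ y, 0 < pn' y)
    (hagree : ∀ y, y ≠ y₀ → pn y = pn' y)
    (hlt : pn y₀ < pn' y₀) :
    pd y₀ / (pn y₀ * ∑ y : Y, pd y / pn y)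
      > pd y₀ / (pn' y₀ * ∑ y : Y, pd y / pn' y) := by
  classical
  set R : ℝ := ∑ y ∈ univ.erase y₀, pd y / pn y with hR
  have hRR' : R = ∑ y ∈ univ.erase y₀, pd y / pn' y := by
    apply Finset.sum_congr rfl
    intro y hy
    rw [hagree y (Finset.ne_of_mem_erase hy)]
  have hS : ∑ y : Y, pd y / pn y = pd y₀ / pn y₀ + R := by
    rw [hR, ← Finset.add_sum_erase _ _ (Finset.mem_univ y₀)]
  have hS' : ∑ y : Y, pd y / pn' y = pd y₀ / pn' y₀ + R := by
    rw [hRR', ← Finset.add_sum_erase _ _ (Finset.mem_univ y₀)]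
  have hRpos : 0 < R := by
    obtain ⟨y, hy⟩ := Fintype.exists_ne_of_one_lt_card hcard y₀
    apply Finset.sum_pos
    · intro i hi; exact div_pos (hpd i) (hpn i)
    · exact ⟨y, Finset.mem_erase.mpr ⟨hy, Finset.mem_univ y⟩⟩
  have h1 : pn y₀ * ∑ y : Y, pd y / pn y = pd y₀ + pn y₀ * R := by
    rw [hS, mul_add, mul_div_cancel₀ _ (hpn y₀).ne']
  have h2 : pn' y₀ * ∑ y : Y, pd y / pn' y = pd y₀ + pn' y₀ * R := by
    rw [hS', mul_add, mul_div_cancel₀ _ (hpn' y₀).ne']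
  rw [h1, h2]
  apply div_lt_div_of_pos_left (hpd y₀)
  · have := mul_pos (hpn y₀) hRpos; linarith [hpd y₀]
  · have := mul_lt_mul_of_pos_right hlt hRpos
    linarith
end
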